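/- Suppose γ ∈ (0,1] and σ' > 0 satisfies ‖Aβ‖² ≤ (σ'/γ) Σ_{k=1}^K ‖Aβ_[k]‖² for all β ∈ ℝ^n, each ℓ_i is μ-strongly convex with μ ≥ 0, and Θ ∈ [0,1). Let α ∈ ℝ^n with D(α) < ∞, let each Δα_[k] (supported on P_k) be a Θ-approximate solution of the k-th subproblem at (Aα, α_[k]), and set α⁺ := α + γ Σ_{k=1}^K Δα_[k]. Then for every s ∈ (0,1] and every u ∈ ℝ^n with u_i ∈ ∂ℓ*_i(−x_i^T w(α)) for all i, D(α) − D(α⁺) ≥ γ(1 − Θ)( s·G(α) − (σ' s²/(2τ)) R ), where R := −(τμ(1 − s)/(σ' s))‖u − α‖² + Σ_{k=1}^K ‖A(u − α)_[k]‖². -/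

import Mathlib

open scoped BigOperators

noncomputable section

namespace ProxCoCoA

/-- Euclidean dot product on `Fin m → ℝ`. -/
def dotp {m : ℕ} (u v : Fin m → ℝ) : ℝ := ∑ j, u j * v j

/-- Squared Euclidean norm on `Fin m → ℝ`. -/
def sqnorm {m : ℕ} (u : Fin m → ℝ) : ℝ := ∑ j, (u j) ^ 2

/-- The `i`-th column `x_i` of the data matrix `A`. -/
def col {d n : ℕ} (A : Matrix (Fin d) (Fin n) ℝ) (i : Fin n) : Fin d → ℝ := fun j => A j i

/-- The restriction `β_[k]` of a vector to block `k` of the partition given by `part`. -/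
def restr {n K : ℕ} (part : Fin n → Fin K) (k : Fin K) (β : Fin n → ℝ) : Fin n → ℝ :=
  fun i => if part i = k then β i else 0

/-- The block `P_k` of the partition, as a finset. -/
def block {n K : ℕ} (part : Fin n → Fin K) (k : Fin K) : Finset (Fin n) :=
  Finset.univ.filter (fun i => part i = k)

/-- A vector is supported on block `P_k`. -/
def supportedOn {n K : ℕ} (part : Fin n → Fin K) (k : Fin K) (β : Fin n → ℝ) : Prop :=
  ∀ i, part i ≠ k → β i = 0

/-- σ_k := sup { ‖Aβ‖²/‖β‖² : β ≠ 0 supported on P_k }. -/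
def sigmaBlock {d n K : ℕ} (A : Matrix (Fin d) (Fin n) ℝ) (part : Fin n → Fin K)
    (k : Fin K) : ℝ :=
  sSup {r : ℝ | ∃ β : Fin n → ℝ, β ≠ 0 ∧ supportedOn part k β ∧
    r = sqnorm (A.mulVec β) / sqnorm β}

/-- The primal objective `D(α) = f(Aα) + Σᵢ ℓᵢ(αᵢ)`, extended-real valued. -/
def Dobj {d n : ℕ} (f : (Fin d → ℝ) → ℝ) (A : Matrix (Fin d) (Fin n) ℝ)
    (ℓ : Fin n → ℝ → EReal) (α : Fin n → ℝ) : EReal :=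
  (f (A.mulVec α) : EReal) + ∑ i, ℓ i (α i)

/-- The local subproblem objective
`G_k^{σ'}(Δ; v, α) = f(v)/K + ∇f(v)ᵀ A Δ + σ'/(2τ) ‖AΔ‖² + Σ_{i ∈ P_k} ℓᵢ(αᵢ + Δᵢ)`. -/
def Gk {d n K : ℕ} (f : (Fin d → ℝ) → ℝ) (f' : (Fin d → ℝ) → Fin d → ℝ)
    (A : Matrix (Fin d) (Fin n) ℝ) (ℓ : Fin n → ℝ → EReal) (part : Fin n → Fin K)
    (τ σ' : ℝ) (k : Fin K) (v : Fin d → ℝ) (α Δ : Fin n → ℝ) : EReal :=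
  ((f v / K + dotp (f' v) (A.mulVec Δ) + σ' / (2 * τ) * sqnorm (A.mulVec Δ) : ℝ) : EReal)
    + ∑ i ∈ block part k, ℓ i (α i + Δ i)

/-- Fenchel conjugate of a scalar extended-real-valued function. -/
def conj (g : ℝ → EReal) (z : ℝ) : EReal := ⨆ a : ℝ, ((z * a : ℝ) : EReal) - g a

/-- Fenchel conjugate of the (real-valued) smooth part `f`. -/
def fconj {d : ℕ} (f : (Fin d → ℝ) → ℝ) (w : Fin d → ℝ) : EReal :=
  ⨆ v : Fin d → ℝ, ((dotp w v - f v : ℝ) : EReal)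

/-- The dual objective `P(w) = f*(w) + Σᵢ ℓᵢ*(-xᵢᵀ w)`. -/
def Pobj {d n : ℕ} (f : (Fin d → ℝ) → ℝ) (A : Matrix (Fin d) (Fin n) ℝ)
    (ℓ : Fin n → ℝ → EReal) (w : Fin d → ℝ) : EReal :=
  fconj f w + ∑ i, conj (ℓ i) (-(dotp (col A i) w))

/-- The duality gap `G(α) = P(w(α)) + D(α)`, with `w(α) = ∇f(Aα)`. -/
def gap {d n : ℕ} (f : (Fin d → ℝ) → ℝ) (f' : (Fin d → ℝ) → Fin d → ℝ)
    (A : Matrix (Fin d) (Fin n) ℝ) (ℓ : Fin n → ℝ → EReal) (α : Fin n → ℝ) : EReal :=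
  Pobj f A ℓ (f' (A.mulVec α)) + Dobj f A ℓ α

/-- `u ∈ ∂g*(z)`: `u` is a subgradient of the conjugate of `g` at `z`. -/
def IsConjSubgradient (g : ℝ → EReal) (z u : ℝ) : Prop :=
  ∀ y : ℝ, conj g z + ((u * (y - z) : ℝ) : EReal) ≤ conj g y

/-- `g` is proper: never `-∞`, finite somewhere. -/
def ProperFn (g : ℝ → EReal) : Prop := (∀ a, g a ≠ ⊥) ∧ ∃ a, g a ≠ ⊤

/-- `μ`-strong convexity of an extended-real-valued function (`μ = 0` is plain convexity). -/
def StronglyConvexFn (μ : ℝ) (g : ℝ → EReal) : Prop :=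
  ∀ a b t : ℝ, 0 ≤ t → t ≤ 1 →
    g (t * a + (1 - t) * b) + ((μ / 2 * t * (1 - t) * (a - b) ^ 2 : ℝ) : EReal)
      ≤ (t : EReal) * g a + ((1 - t : ℝ) : EReal) * g b

/-- `f'` is a gradient certifying convexity of `f` (first-order lower bound). -/
def ConvexWithGrad {d : ℕ} (f : (Fin d → ℝ) → ℝ) (f' : (Fin d → ℝ) → Fin d → ℝ) : Prop :=
  ∀ u v : Fin d → ℝ, f v + dotp (f' v) (u - v) ≤ f u

/-- `f` is `(1/τ)`-smooth with gradient `f'` (first-order quadratic upper bound). -/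
def SmoothWithGrad {d : ℕ} (τ : ℝ) (f : (Fin d → ℝ) → ℝ)
    (f' : (Fin d → ℝ) → Fin d → ℝ) : Prop :=
  ∀ u v : Fin d → ℝ, f u ≤ f v + dotp (f' v) (u - v) + 1 / (2 * τ) * sqnorm (u - v)

/-- `Δ` is a `Θ`-approximate solution of the `k`-th local subproblem at `(v, α)`. -/
def ThetaApprox {d n K : ℕ} (f : (Fin d → ℝ) → ℝ) (f' : (Fin d → ℝ) → Fin d → ℝ)
    (A : Matrix (Fin d) (Fin n) ℝ) (ℓ : Fin n → ℝ → EReal) (part : Fin n → Fin K)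
    (τ σ' Θ : ℝ) (k : Fin K) (v : Fin d → ℝ) (α Δ : Fin n → ℝ) : Prop :=
  supportedOn part k Δ ∧
    ∃ Δs : Fin n → ℝ, supportedOn part k Δs ∧
      (∀ Δ' : Fin n → ℝ, supportedOn part k Δ' →
        Gk f f' A ℓ part τ σ' k v α Δs ≤ Gk f f' A ℓ part τ σ' k v α Δ') ∧
      Gk f f' A ℓ part τ σ' k v α Δ - Gk f f' A ℓ part τ σ' k v α Δs
        ≤ (Θ : EReal) * (Gk f f' A ℓ part τ σ' k v α 0 - Gk f f' A ℓ part τ σ' k v α Δs)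




/-- EReal coercion commutes with finite sums. -/
lemma coe_sum {ι : Type*} (s : Finset ι) (f : ι → ℝ) :
    ((∑ i ∈ s, f i : ℝ) : EReal) = ∑ i ∈ s, ((f i : ℝ) : EReal) := by
  induction s using Finset.cons_induction with
  | empty => simp
  | cons i s hi ih => rw [Finset.sum_cons, Finset.sum_cons, ← ih, EReal.coe_add]

lemma sum_ne_bot {ι : Type*} (s : Finset ι) (F : ι → EReal) (h : ∀ i ∈ s, F i ≠ ⊥) :
    ∑ i ∈ s, F i ≠ ⊥ := by
  induction s using Finset.cons_induction with
  | empty => simp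
  | cons i s hi ih =>
    rw [Finset.sum_cons]
    rw [Ne, EReal.add_eq_bot_iff]
    push_neg
    exact ⟨h i (Finset.mem_cons_self i s), ih fun j hj => h j (Finset.mem_cons_of_mem hj)⟩

lemma sum_eq_top {ι : Type*} [DecidableEq ι] (s : Finset ι) (F : ι → EReal) (h : ∀ i ∈ s, F i ≠ ⊥)
    {i₀ : ι} (hi₀ : i₀ ∈ s) (htop : F i₀ = ⊤) : ∑ i ∈ s, F i = ⊤ := by
  rw [← Finset.add_sum_erase _ _ hi₀, htop]
  exact EReal.top_add_of_ne_bot (sum_ne_bot _ _ fun j hj => h j (Finset.mem_of_mem_erase hj))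

lemma ne_top_of_sum {ι : Type*} [DecidableEq ι] (s : Finset ι) (F : ι → EReal) (h : ∀ i ∈ s, F i ≠ ⊥)
    (hs : ∑ i ∈ s, F i ≠ ⊤) {i₀ : ι} (hi₀ : i₀ ∈ s) : F i₀ ≠ ⊤ :=
  fun ht => hs (sum_eq_top s F h hi₀ ht)

lemma fenchel_young (g : ℝ → EReal) (z a : ℝ) : ((z * a : ℝ) : EReal) - g a ≤ conj g z :=
  le_iSup (fun a => ((z * a : ℝ) : EReal) - g a) a

lemma conj_ne_bot (g : ℝ → EReal) (hg : ProperFn g) (z : ℝ) : conj g z ≠ ⊥ := by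
  obtain ⟨a, ha⟩ := hg.2
  intro h
  have h2 := fenchel_young g z a
  rw [h, le_bot_iff] at h2
  lift g a to ℝ using ⟨ha, hg.1 a⟩ with r hr
  rw [← EReal.coe_sub] at h2
  exact EReal.coe_ne_bot _ h2


def CvxE (g : ℝ → EReal) : Prop :=
  ∀ a b t : ℝ, 0 ≤ t → t ≤ 1 →
    g (t * a + (1 - t) * b) ≤ (t : EReal) * g a + ((1 - t : ℝ) : EReal) * g b

lemma cvx_real {g : ℝ → EReal} (hc : CvxE g) {a b t ca cb : ℝ}
    (ht0 : 0 ≤ t) (ht1 : t ≤ 1) (ha : g a ≤ (ca : EReal)) (hb : g b ≤ (cb : EReal))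
    (hbot : ∀ x, g x ≠ ⊥) :
    g (t * a + (1 - t) * b) ≤ ((t * ca + (1 - t) * cb : ℝ) : EReal) := by
  have ha' : g a ≠ ⊤ := ne_top_of_le_ne_top (EReal.coe_ne_top ca) ha
  have hb' : g b ≠ ⊤ := ne_top_of_le_ne_top (EReal.coe_ne_top cb) hb
  lift g a to ℝ using ⟨ha', hbot a⟩ with ra hra
  lift g b to ℝ using ⟨hb', hbot b⟩ with rb hrb
  refine (hc a b t ht0 ht1).trans ?_
  rw [← hra, ← hrb, ← EReal.coe_mul, ← EReal.coe_mul, ← EReal.coe_add]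
  have h1 : ra ≤ ca := by exact_mod_cast ha
  have h2 : rb ≤ cb := by exact_mod_cast hb
  exact_mod_cast add_le_add (mul_le_mul_of_nonneg_left h1 ht0)
    (mul_le_mul_of_nonneg_left h2 (by linarith))

/-- Right-extension slope lower bound: anchored at `a₀ < b`, lower bound to the right of `b`. -/
lemma slope_lb {g : ℝ → EReal} (hbot : ∀ x, g x ≠ ⊥) (hc : CvxE g)
    {a₀ b ra rb : ℝ} (h0 : a₀ < b) (ha : g a₀ ≤ (ra : EReal)) (hb : (rb : EReal) ≤ g b) :
    ∀ a, b ≤ a → ((rb + (rb - ra) / (b - a₀) * (a - b) : ℝ) : EReal) ≤ g a := by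
  intro a hba
  rcases eq_or_lt_of_le hba with rfl | hba'
  · simpa using hb
  by_cases htop : g a = ⊤
  · rw [htop]; exact le_top
  lift g a to ℝ using ⟨htop, hbot a⟩ with c hcc
  have ha0top : g a₀ ≠ ⊤ := ne_top_of_le_ne_top (EReal.coe_ne_top ra) ha
  lift g a₀ to ℝ using ⟨ha0top, hbot a₀⟩ with c₀ hc₀
  have hc₀ra : c₀ ≤ ra := by exact_mod_cast ha
  set t : ℝ := (b - a₀) / (a - a₀) with hts
  have haa₀ : (0:ℝ) < a - a₀ := by linarith
  have hba₀ : (0:ℝ) < b - a₀ := by linarith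
  have ht0 : 0 ≤ t := le_of_lt (div_pos hba₀ haa₀)
  have ht1 : t ≤ 1 := by rw [hts, div_le_one haa₀]; linarith
  have hpt : t * a + (1 - t) * a₀ = b := by rw [hts]; field_simp; ring
  have hcv := cvx_real hc ht0 ht1 hcc.symm.le
    hc₀.symm.le hbot
  rw [hpt] at hcv
  have hkey : rb ≤ t * c + (1 - t) * c₀ := by exact_mod_cast hb.trans hcv
  have e : t * c + (1 - t) * c₀ = ((b - a₀) * c + (a - b) * c₀) / (a - a₀) := by
    rw [hts]; field_simp; ring
  rw [e, le_div_iff₀ haa₀] at hkey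
  rw [EReal.coe_le_coe_iff]
  have h2 : (0:ℝ) ≤ (a - b) * (ra - c₀) := mul_nonneg (by linarith) (by linarith)
  have hgoal : (rb - ra) / (b - a₀) * (a - b) ≤ c - rb := by
    rw [div_mul_eq_mul_div, div_le_iff₀ hba₀]; nlinarith [hkey, h2]
  linarith [hgoal]

/-- Left-extension slope lower bound: anchored at `x < y` with lower info at `x`,
upper info at `y`, lower bound to the left of `x`. -/
lemma slope_lb_mid {g : ℝ → EReal} (hbot : ∀ x, g x ≠ ⊥) (hc : CvxE g)
    {x y rx ry : ℝ} (h0 : x < y) (hx : (rx : EReal) ≤ g x) (hy : g y ≤ (ry : EReal)) :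
    ∀ a, a ≤ x → ((rx + (ry - rx) / (y - x) * (a - x) : ℝ) : EReal) ≤ g a := by
  intro a hax
  rcases eq_or_lt_of_le hax with rfl | hax'
  · simpa using hx
  by_cases htop : g a = ⊤
  · rw [htop]; exact le_top
  lift g a to ℝ using ⟨htop, hbot a⟩ with c hcc
  have hytop : g y ≠ ⊤ := ne_top_of_le_ne_top (EReal.coe_ne_top ry) hy
  lift g y to ℝ using ⟨hytop, hbot y⟩ with cy hcy
  have hcyry : cy ≤ ry := by exact_mod_cast hy
  set t : ℝ := (y - x) / (y - a) with hts
  have hya : (0:ℝ) < y - a := by linarith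
  have hyx : (0:ℝ) < y - x := by linarith
  have ht0 : 0 ≤ t := le_of_lt (div_pos hyx hya)
  have ht1 : t ≤ 1 := by rw [hts, div_le_one hya]; linarith
  have hpt : t * a + (1 - t) * y = x := by rw [hts]; field_simp; ring
  have hcv := cvx_real hc ht0 ht1 hcc.symm.le
    hcy.symm.le hbot
  rw [hpt] at hcv
  have hkey : rx ≤ t * c + (1 - t) * cy := by exact_mod_cast hx.trans hcv
  have e : t * c + (1 - t) * cy = ((y - x) * c + (x - a) * cy) / (y - a) := by
    rw [hts]; field_simp; ring
  rw [e, le_div_iff₀ hya] at hkey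
  rw [EReal.coe_le_coe_iff]
  have h2 : (0:ℝ) ≤ (x - a) * (ry - cy) := mul_nonneg (by linarith) (by linarith)
  have hgoal : (ry - rx) / (y - x) * (a - x) ≤ c - rx := by
    rw [div_mul_eq_mul_div, div_le_iff₀ hyx]; nlinarith [hkey, h2]
  linarith [hgoal]



lemma term_le {g : ℝ → EReal} {a z l C : ℝ} (hl : (l : EReal) ≤ g a) (h : z * a - l ≤ C) :
    ((z * a : ℝ) : EReal) - g a ≤ (C : EReal) :=
  calc ((z * a : ℝ) : EReal) - g a ≤ ((z * a : ℝ) : EReal) - (l : EReal) :=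
        EReal.sub_le_sub le_rfl hl
    _ = ((z * a - l : ℝ) : EReal) := (EReal.coe_sub _ _).symm
    _ ≤ (C : EReal) := EReal.coe_le_coe_iff.2 h

lemma exists_conj_lt_top {g : ℝ → EReal} (hbot : ∀ x, g x ≠ ⊥) (hfin : ∃ a, g a ≠ ⊤)
    (hlsc : LowerSemicontinuous g) (hc : CvxE g) : ∃ y C : ℝ, conj g y ≤ (C : EReal) := by
  obtain ⟨a₀, ha₀⟩ := hfin
  lift g a₀ to ℝ using ⟨ha₀, hbot a₀⟩ with c₀ hc₀
  have hlt : ((c₀ - 1 : ℝ) : EReal) < g a₀ := by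
    rw [← hc₀]; exact_mod_cast sub_lt_self c₀ one_pos
  have hev := hlsc a₀ _ hlt
  rw [Metric.eventually_nhds_iff] at hev
  obtain ⟨δ, hδpos, hball⟩ := hev
  have near : ∀ x : ℝ, |x - a₀| < δ → ((c₀ - 1 : ℝ) : EReal) ≤ g x := fun x hx =>
    le_of_lt (hball (by rwa [Real.dist_eq]))
  have h2δ : (0:ℝ) < 2 / δ := by positivity
  have hbmem : ((c₀ - 1 : ℝ) : EReal) ≤ g (a₀ + δ / 2) := near _ (by
    rw [add_sub_cancel_left, abs_of_pos (by linarith)]; linarith)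
  have hbmem' : ((c₀ - 1 : ℝ) : EReal) ≤ g (a₀ - δ / 2) := near _ (by
    rw [sub_sub_cancel_left, abs_neg, abs_of_pos (by linarith)]; linarith)
  have hwedgeR := slope_lb hbot hc (show a₀ < a₀ + δ/2 by linarith) hc₀.symm.le hbmem
  have hleft : ∀ a, a ≤ a₀ → ((c₀ - 1 - (2/δ) * (a₀ - a) : ℝ) : EReal) ≤ g a := by
    intro a haa
    by_cases hnear : |a - a₀| < δ
    · refine le_trans (EReal.coe_le_coe_iff.2 ?_) (near a hnear)
      nlinarith [mul_nonneg h2δ.le (sub_nonneg.2 haa)]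
    · rw [abs_sub_comm, abs_of_nonneg (by linarith)] at hnear
      push_neg at hnear
      have h1 : a ≤ a₀ - δ/2 := by linarith
      have := slope_lb_mid hbot hc (show a₀ - δ/2 < a₀ by linarith) hbmem' hc₀.symm.le a h1
      refine le_trans (EReal.coe_le_coe_iff.2 ?_) this
      have e : (c₀ - (c₀ - 1)) / (a₀ - (a₀ - δ/2)) * (a - (a₀ - δ/2))
          = (2/δ) * (a - a₀) + 1 := by
        have hδ : δ ≠ 0 := ne_of_gt hδpos
        rw [sub_sub_cancel, show a₀ - (a₀ - δ/2) = δ/2 by ring]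
        field_simp
        ring
      rw [e]
      nlinarith [mul_nonneg h2δ.le (sub_nonneg.2 haa)]
  by_cases hex : ∃ a₁, a₀ < a₁ ∧ g a₁ ≠ ⊤
  · obtain ⟨a₁, ha₁, ha₁t⟩ := hex
    lift g a₁ to ℝ using ⟨ha₁t, hbot a₁⟩ with c₁ hc₁
    have hR := slope_lb hbot hc ha₁ hc₀.symm.le hc₁.le
    have hL := slope_lb_mid hbot hc ha₁ hc₀.le hc₁.symm.le
    have hM : ∀ a, a₀ ≤ a → a ≤ a₁ → ((c₀ - 1 - (2/δ) * (a₁ - a₀) : ℝ) : EReal) ≤ g a := by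
      intro a h1 h2
      by_cases hnear : |a - a₀| < δ
      · refine le_trans (EReal.coe_le_coe_iff.2 ?_) (near a hnear)
        nlinarith [mul_nonneg h2δ.le (show (0:ℝ) ≤ a₁ - a₀ by linarith)]
      · rw [abs_of_nonneg (by linarith)] at hnear
        push_neg at hnear
        have h3 : a₀ + δ/2 ≤ a := by linarith
        refine le_trans (EReal.coe_le_coe_iff.2 ?_) (hwedgeR a h3)
        have e : (c₀ - 1 - c₀) / (a₀ + δ/2 - a₀) * (a - (a₀ + δ/2))
            = -((2/δ) * (a - a₀ - δ/2)) := by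
          have hδ : δ ≠ 0 := ne_of_gt hδpos
          rw [add_sub_cancel_left]
          field_simp
          ring
        rw [e]
        nlinarith [mul_le_mul_of_nonneg_left (show a - a₀ - δ/2 ≤ a₁ - a₀ by linarith) h2δ.le]
    set y : ℝ := (c₁ - c₀) / (a₁ - a₀) with hy
    refine ⟨y, |y| * (|a₀| + |a₁|) + |c₀| + |c₁| + 1 + (2/δ) * (a₁ - a₀), ?_⟩
    apply iSup_le; intro a
    have hyabs : ∀ x : ℝ, a₀ ≤ x ∨ x ≤ a₁ → |x| ≤ |a₀| + |a₁| ∨ True := fun _ _ => Or.inr trivial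
    have hnn : (0:ℝ) ≤ (2/δ) * (a₁ - a₀) := mul_nonneg h2δ.le (by linarith)
    rcases le_or_gt a a₀ with h | h
    · refine term_le (hL a h) ?_
      have e : c₀ + (c₁ - c₀) / (a₁ - a₀) * (a - a₀) = c₀ + y * (a - a₀) := by rw [hy]
      rw [e]
      have h1 : y * a₀ ≤ |y| * |a₀| := (le_abs_self _).trans (le_of_eq (abs_mul y a₀))
      have h2 : |y| * |a₀| ≤ |y| * (|a₀| + |a₁|) :=
        mul_le_mul_of_nonneg_left (by linarith [abs_nonneg a₁]) (abs_nonneg y)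
      have h3 : -c₀ ≤ |c₀| := neg_le_abs c₀
      have : y * a - (c₀ + y * (a - a₀)) = y * a₀ - c₀ := by ring
      rw [this]
      linarith [abs_nonneg c₁]
    rcases le_or_gt a a₁ with h2 | h2
    · refine term_le (hM a h.le h2) ?_
      have habs : |a| ≤ |a₀| + |a₁| :=
        abs_le.2 ⟨by linarith [neg_abs_le a₀, abs_nonneg a₁], by linarith [le_abs_self a₁, abs_nonneg a₀]⟩
      have h1 : y * a ≤ |y| * |a| := (le_abs_self _).trans (le_of_eq (abs_mul y a))
      have h2' : |y| * |a| ≤ |y| * (|a₀| + |a₁|) :=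
        mul_le_mul_of_nonneg_left habs (abs_nonneg y)
      linarith [neg_le_abs c₀, abs_nonneg c₁]
    · refine term_le (hR a h2.le) ?_
      have e : c₁ + (c₁ - c₀) / (a₁ - a₀) * (a - a₁) = c₁ + y * (a - a₁) := by rw [hy]
      rw [e]
      have h1 : y * a₁ ≤ |y| * |a₁| := (le_abs_self _).trans (le_of_eq (abs_mul y a₁))
      have h2' : |y| * |a₁| ≤ |y| * (|a₀| + |a₁|) :=
        mul_le_mul_of_nonneg_left (by linarith [abs_nonneg a₀]) (abs_nonneg y)
      have : y * a - (c₁ + y * (a - a₁)) = y * a₁ - c₁ := by ring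
      rw [this]
      linarith [neg_le_abs c₁, abs_nonneg c₀]
  · push_neg at hex
    refine ⟨2/δ, (2/δ) * a₀ - c₀ + 1, ?_⟩
    apply iSup_le; intro a
    rcases le_or_gt a a₀ with h | h
    · refine term_le (hleft a h) (le_of_eq (by ring))
    · rw [hex a h, EReal.sub_top]
      exact bot_le

lemma key_case {g : ℝ → EReal} (hbot : ∀ x, g x ≠ ⊥) (hc : CvxE g)
    (hlsc : LowerSemicontinuous g) {z u : ℝ}
    (hu : ∀ y : ℝ, conj g z + ((u * (y - z) : ℝ) : EReal) ≤ conj g y)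
    {G : ℝ} (hG : conj g z = (G : EReal))
    {a₀ r r' : ℝ} (ha₀u : a₀ < u) (hrG : -G < r) (hrr' : r < r')
    (ha₀ : g a₀ < ((z * a₀ + r : ℝ) : EReal))
    (hgu : ((r' + z * u : ℝ) : EReal) < g u) : False := by
  have hlow : ∀ a : ℝ, ((z * a - G : ℝ) : EReal) ≤ g a := by
    intro a
    by_cases ht : g a = ⊤
    · rw [ht]; exact le_top
    lift g a to ℝ using ⟨ht, hbot a⟩ with c hca
    have hfy := fenchel_young g z a
    rw [← hca, hG, ← EReal.coe_sub, EReal.coe_le_coe_iff] at hfy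
    exact EReal.coe_le_coe_iff.2 (by linarith)
  have hev := hlsc u _ hgu
  rw [Metric.eventually_nhds_iff] at hev
  obtain ⟨δ, hδpos, hball⟩ := hev
  set ε : ℝ := (r' - r) / (2 * (|z| + 1)) with hε
  have habs1 : (0:ℝ) < |z| + 1 := by positivity
  have hεpos : 0 < ε := div_pos (by linarith) (by linarith)
  set m : ℝ := min (min (δ/2) ε) ((u - a₀)/2) with hm
  have hmpos : 0 < m := lt_min (lt_min (by linarith) hεpos) (by linarith)
  set b : ℝ := u - m with hb
  have hbu : b < u := by rw [hb]; linarith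
  have hba₀ : a₀ < b := by
    have : m ≤ (u - a₀)/2 := min_le_right _ _
    rw [hb]; linarith
  have hbd : dist b u < δ := by
    rw [Real.dist_eq, hb]
    have h1 : m ≤ δ/2 := le_trans (min_le_left _ _) (min_le_left _ _)
    rw [show u - m - u = -m by ring, abs_neg, abs_of_pos hmpos]
    linarith
  have hbg : ((r' + z * u : ℝ) : EReal) < g b := hball hbd
  have hzb : |z| * (u - b) ≤ (r' - r)/2 := by
    have h1 : u - b = m := by rw [hb]; ring
    have h2 : m ≤ ε := le_trans (min_le_left _ _) (min_le_right _ _)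
    rw [h1]
    calc |z| * m ≤ (|z| + 1) * ε :=
          mul_le_mul (by linarith) h2 hmpos.le (by linarith)
      _ = (r' - r)/2 := by rw [hε]; field_simp
  have hb2 : (((r + r')/2 + z * b : ℝ) : EReal) ≤ g b := by
    refine le_of_lt (lt_of_le_of_lt (EReal.coe_le_coe_iff.2 ?_) hbg)
    have h4 : (0:ℝ) ≤ u - b := by linarith
    have h3 : -(|z| * (u - b)) ≤ z * (u - b) := by
      have h5 := neg_abs_le (z * (u - b))
      rwa [abs_mul, abs_of_nonneg h4] at h5
    have h5 : z * (u - b) = z * u - z * b := by ring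
    nlinarith [h3, h5, hzb]
  have hslope := slope_lb hbot hc hba₀ ha₀.le hb2
  set σ : ℝ := (r' - r)/(2*(b - a₀)) with hσ
  have hσpos : 0 < σ := div_pos (by linarith) (by linarith)
  have hba0 : b - a₀ ≠ 0 := by intro h; linarith [hba₀]
  have h9 : σ * (b - a₀) = (r' - r) / 2 := by
    rw [hσ, div_mul_eq_mul_div, mul_comm (2:ℝ) (b - a₀), ← div_div,
      mul_div_assoc, div_self hba0, mul_one]
  have hs : ((r + r')/2 + z*b - (z*a₀ + r))/(b - a₀) = z + σ := by
    rw [div_eq_iff hba0]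
    linear_combination -h9
  have hconjb : conj g (z + σ) ≤ ((σ * b + G : ℝ) : EReal) := by
    apply iSup_le; intro a
    rcases le_or_gt b a with h | h
    · refine term_le (hslope a h) ?_
      rw [hs]
      have e : (z + σ)*a - ((r + r')/2 + z*b + (z + σ)*(a - b)) = σ*b - (r+r')/2 := by ring
      linarith [e]
    · refine term_le (hlow a) ?_
      have e : (z + σ)*a - (z*a - G) = σ*a + G := by ring
      have h2 : σ*a ≤ σ*b := mul_le_mul_of_nonneg_left h.le hσpos.le
      linarith [e, h2]
  have hcontr := hu (z + σ)
  rw [hG] at hcontr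
  have e2 : (u * ((z + σ) - z) : ℝ) = u * σ := by ring
  rw [e2, ← EReal.coe_add] at hcontr
  have h6 := le_trans hcontr hconjb
  rw [EReal.coe_le_coe_iff] at h6
  have h7 : u * σ ≤ b * σ := by linarith
  have h8 : u ≤ b := le_of_mul_le_mul_right h7 hσpos
  linarith

lemma conj_neg (g : ℝ → EReal) (y : ℝ) : conj (fun a => g (-a)) y = conj g (-y) := by
  unfold conj
  apply le_antisymm
  · apply iSup_le; intro a
    calc ((y * a : ℝ) : EReal) - g (-a) = ((-y * -a : ℝ) : EReal) - g (-a) := by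
          rw [neg_mul_neg]
      _ ≤ _ := le_iSup (fun x => ((-y * x : ℝ) : EReal) - g x) (-a)
  · apply iSup_le; intro a
    calc ((-y * a : ℝ) : EReal) - g a = ((y * (-a) : ℝ) : EReal) - g (-(-a)) := by
          rw [neg_neg, mul_neg, neg_mul]
      _ ≤ _ := le_iSup (fun x => ((y * x : ℝ) : EReal) - g (-x)) (-a)

lemma CvxE_neg {g : ℝ → EReal} (hc : CvxE g) : CvxE (fun a => g (-a)) := by
  intro a b t ht0 ht1
  show g (-(t * a + (1 - t) * b)) ≤ _
  rw [show -(t * a + (1 - t) * b) = t * (-a) + (1 - t) * (-b) by ring]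
  exact hc (-a) (-b) t ht0 ht1

lemma conj_subgrad {g : ℝ → EReal} (hbot : ∀ x, g x ≠ ⊥) (hfin : ∃ a, g a ≠ ⊤)
    (hlsc : LowerSemicontinuous g) (hc : CvxE g) {z u : ℝ}
    (hu : ∀ y : ℝ, conj g z + ((u * (y - z) : ℝ) : EReal) ≤ conj g y) :
    ∃ G : ℝ, conj g z = (G : EReal) ∧ g u = ((u * z - G : ℝ) : EReal) := by
  have hnb : conj g z ≠ ⊥ := conj_ne_bot g ⟨hbot, hfin⟩ z
  have hnt : conj g z ≠ ⊤ := by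
    intro htop
    obtain ⟨y, C, hyC⟩ := exists_conj_lt_top hbot hfin hlsc hc
    have h1 := hu y
    rw [htop, EReal.top_add_of_ne_bot (EReal.coe_ne_bot _)] at h1
    have h2 := le_trans h1 hyC
    exact absurd h2 (by simp)
  obtain ⟨G, hGc⟩ : ∃ G : ℝ, conj g z = (G : EReal) :=
    ⟨(conj g z).toReal, (EReal.coe_toReal hnt hnb).symm⟩
  refine ⟨G, hGc, ?_⟩
  have hge : ((z * u - G : ℝ) : EReal) ≤ g u := by
    by_cases ht : g u = ⊤
    · rw [ht]; exact le_top
    lift g u to ℝ using ⟨ht, hbot u⟩ with c hcu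
    have hfy := fenchel_young g z u
    rw [← hcu, hGc, ← EReal.coe_sub, EReal.coe_le_coe_iff] at hfy
    exact EReal.coe_le_coe_iff.2 (by linarith)
  have hle : g u ≤ ((z * u - G : ℝ) : EReal) := by
    by_contra hcon
    push_neg at hcon
    obtain ⟨q, hq1, hq2⟩ := EReal.exists_between_coe_real hcon
    obtain ⟨q', hq'1, hq'2⟩ := EReal.exists_between_coe_real hq2
    have hq1' : z * u - G < q := by exact_mod_cast hq1
    have hqq' : q < q' := by exact_mod_cast hq'1
    have hGlt : ((-(q - z*u) : ℝ) : EReal) < conj g z := by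
      rw [hGc, EReal.coe_lt_coe_iff]; linarith
    rw [conj, lt_iSup_iff] at hGlt
    obtain ⟨a₀, ha₀⟩ := hGlt
    have ha₀t : g a₀ ≠ ⊤ := by
      intro ht; rw [ht, EReal.sub_top] at ha₀; exact absurd ha₀ (by simp)
    lift g a₀ to ℝ using ⟨ha₀t, hbot a₀⟩ with c₀ hc₀
    rw [← EReal.coe_sub, EReal.coe_lt_coe_iff] at ha₀
    have hc₀lt : c₀ < z * a₀ + (q - z*u) := by linarith
    have hr1 : -G < q - z*u := by linarith
    have hr2 : q - z*u < q' - z*u := by linarith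
    have hgu' : ((q' - z*u + z * u : ℝ) : EReal) < g u := by
      rw [show q' - z*u + z*u = q' by ring]; exact hq'2
    rcases lt_trichotomy a₀ u with hlt' | heq | hgt
    · refine key_case hbot hc hlsc hu hGc hlt' hr1 hr2 ?_ hgu'
      rw [← hc₀]; exact_mod_cast hc₀lt
    · rw [heq] at hc₀lt hc₀
      have hq'c : (q' : EReal) < (c₀ : EReal) := by rw [hc₀]; exact hq'2
      rw [EReal.coe_lt_coe_iff] at hq'c
      linarith
    · have hbot' : ∀ x : ℝ, (fun a => g (-a)) x ≠ ⊥ := fun x => hbot (-x)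
      have hlsc' : LowerSemicontinuous (fun a => g (-a)) :=
        LowerSemicontinuous.comp hlsc continuous_neg
      have hu' : ∀ y : ℝ, conj (fun a => g (-a)) (-z) + (((-u) * (y - (-z)) : ℝ) : EReal)
          ≤ conj (fun a => g (-a)) y := by
        intro y
        rw [conj_neg, conj_neg, neg_neg]
        have h1 := hu (-y)
        rw [show ((-u) * (y - (-z)) : ℝ) = u * ((-y) - z) by ring]
        exact h1
      have hG' : conj (fun a => g (-a)) (-z) = (G : EReal) := by
        rw [conj_neg, neg_neg]; exact hGc
      refine key_case hbot' (CvxE_neg hc) hlsc' hu' hG' (show -a₀ < -u by linarith) hr1 hr2 ?_ ?_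
      · show g (-(-a₀)) < _
        rw [neg_neg, ← hc₀]
        exact_mod_cast (show c₀ < -z * -a₀ + (q - z*u) by rw [neg_mul_neg]; linarith)
      · show _ < g (-(-u))
        rw [neg_neg]
        rw [show (q' - z*u + -z * -u : ℝ) = q' by ring]
        exact hq'2
  rw [show (u * z - G : ℝ) = z * u - G by ring]
  exact le_antisymm hle hge

section Helpers3
variable {d n K : ℕ}

lemma dotp_zero_right {m : ℕ} (w : Fin m → ℝ) : dotp w 0 = 0 := by
  simp [dotp]

lemma sqnorm_zero {m : ℕ} : sqnorm (0 : Fin m → ℝ) = 0 := by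
  simp [sqnorm]

lemma dotp_add_right {m : ℕ} (w x y : Fin m → ℝ) : dotp w (x + y) = dotp w x + dotp w y := by
  simp [dotp, Finset.sum_add_distrib, mul_add]

lemma dotp_smul_right {m : ℕ} (w : Fin m → ℝ) (c : ℝ) (x : Fin m → ℝ) :
    dotp w (c • x) = c * dotp w x := by
  simp only [dotp, Pi.smul_apply, smul_eq_mul, Finset.mul_sum]
  exact Finset.sum_congr rfl fun i _ => by ring

lemma dotp_sub_right {m : ℕ} (w x y : Fin m → ℝ) : dotp w (x - y) = dotp w x - dotp w y := by
  simp [dotp, Finset.sum_sub_distrib, mul_sub]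

lemma sqnorm_smul {m : ℕ} (c : ℝ) (x : Fin m → ℝ) : sqnorm (c • x) = c ^ 2 * sqnorm x := by
  simp [sqnorm, Finset.mul_sum]; ring_nf

lemma dotp_sum_right {m : ℕ} {ι : Type*} (w : Fin m → ℝ) (s : Finset ι) (v : ι → Fin m → ℝ) :
    dotp w (∑ k ∈ s, v k) = ∑ k ∈ s, dotp w (v k) := by
  induction s using Finset.cons_induction with
  | empty => simp [dotp]
  | cons k s hk ih => rw [Finset.sum_cons, Finset.sum_cons, dotp_add_right, ih]

lemma mulVec_finsum {ι : Type*} (A : Matrix (Fin d) (Fin n) ℝ) (s : Finset ι)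
    (v : ι → Fin n → ℝ) : A.mulVec (∑ k ∈ s, v k) = ∑ k ∈ s, A.mulVec (v k) := by
  induction s using Finset.cons_induction with
  | empty => simp
  | cons k s hk ih => rw [Finset.sum_cons, Finset.sum_cons, Matrix.mulVec_add, ih]

lemma dotp_mulVec (A : Matrix (Fin d) (Fin n) ℝ) (w : Fin d → ℝ) (β : Fin n → ℝ) :
    dotp w (A.mulVec β) = ∑ i, β i * dotp (col A i) w := by
  simp only [dotp, Matrix.mulVec, dotProduct, col, Finset.mul_sum, Finset.sum_mul]
  rw [Finset.sum_comm]
  congr 1; ext i; congr 1; ext j; ring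

lemma sum_restr (part : Fin n → Fin K) (β : Fin n → ℝ) :
    ∑ k, restr part k β = β := by
  funext i
  rw [Finset.sum_apply]
  simp only [restr]
  rw [Finset.sum_ite_eq (Finset.univ : Finset (Fin K)) (part i) (fun _ => β i)]
  simp

lemma restr_eq_of_supported {part : Fin n → Fin K} {Δα : Fin K → Fin n → ℝ}
    (hs : ∀ k, supportedOn part k (Δα k)) (k : Fin K) :
    restr part k (∑ j, Δα j) = Δα k := by
  funext i
  simp only [restr, Finset.sum_apply]
  by_cases h : part i = k
  · rw [if_pos h]
    rw [Finset.sum_eq_single k]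
    · intro j _ hj; exact hs j i (fun hpj => hj (hpj ▸ h ▸ rfl))
    · intro h'; exact absurd (Finset.mem_univ k) h'
  · rw [if_neg h]
    exact (hs k i h).symm

lemma sum_apply_supported {part : Fin n → Fin K} {Δα : Fin K → Fin n → ℝ}
    (hs : ∀ k, supportedOn part k (Δα k)) (i : Fin n) :
    (∑ j, Δα j) i = Δα (part i) i := by
  have := congrFun (restr_eq_of_supported hs (part i)) i
  simpa [restr] using this

lemma restr_smul (part : Fin n → Fin K) (k : Fin K) (c : ℝ) (β : Fin n → ℝ) :
    restr part k (c • β) = c • restr part k β := by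
  funext i
  simp only [restr, Pi.smul_apply, smul_eq_mul]
  split <;> simp

lemma restr_supported (part : Fin n → Fin K) (k : Fin K) (β : Fin n → ℝ) :
    supportedOn part k (restr part k β) := fun i hi => by simp [restr, hi]

lemma zero_supported (part : Fin n → Fin K) (k : Fin K) :
    supportedOn part k (0 : Fin n → ℝ) := fun i _ => rfl

lemma sum_blocks {M : Type*} [AddCommMonoid M] (part : Fin n → Fin K) (F : Fin n → M) :
    ∑ k, ∑ i ∈ block part k, F i = ∑ i, F i := by
  simpa [block] using
    Finset.sum_fiberwise_of_maps_to (g := part) (t := (Finset.univ : Finset (Fin K)))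
      (fun i _ => Finset.mem_univ (part i)) F

end Helpers3

set_option maxHeartbeats 1000000 in
/-- Lemma 5 of the paper, deterministic form: one outer round of the
framework decreases the objective proportionally to the duality gap, up to the error term `R`. -/
theorem per_round_progress {d n K : ℕ} (hK : 0 < K)
    (A : Matrix (Fin d) (Fin n) ℝ) (part : Fin n → Fin K)
    (f : (Fin d → ℝ) → ℝ) (f' : (Fin d → ℝ) → Fin d → ℝ)
    (ℓ : Fin n → ℝ → EReal) (τ : ℝ) (hτ : 0 < τ)
    (hfconv : ConvexWithGrad f f') (hfsmooth : SmoothWithGrad τ f f')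
    (hℓproper : ∀ i, ProperFn (ℓ i)) (hℓlsc : ∀ i, LowerSemicontinuous (ℓ i))
    (μ : ℝ) (hμ : 0 ≤ μ) (hℓsc : ∀ i, StronglyConvexFn μ (ℓ i))
    (γ σ' : ℝ) (hγ0 : 0 < γ) (hγ1 : γ ≤ 1) (hσ' : 0 < σ')
    (hsafe : ∀ β : Fin n → ℝ,
      sqnorm (A.mulVec β) ≤ σ' / γ * ∑ k, sqnorm (A.mulVec (restr part k β)))
    (Θ : ℝ) (hΘ0 : 0 ≤ Θ) (hΘ1 : Θ < 1)
    (α : Fin n → ℝ) (hα : Dobj f A ℓ α < ⊤)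
    (Δα : Fin K → Fin n → ℝ)
    (hΔα : ∀ k, ThetaApprox f f' A ℓ part τ σ' Θ k (A.mulVec α) α (Δα k))
    (s : ℝ) (hs0 : 0 < s) (hs1 : s ≤ 1)
    (u : Fin n → ℝ)
    (hu : ∀ i, IsConjSubgradient (ℓ i) (-(dotp (col A i) (f' (A.mulVec α)))) (u i)) :
    ((γ * (1 - Θ) : ℝ) : EReal) *
        ((s : EReal) * gap f f' A ℓ α
          - ((σ' * s ^ 2 / (2 * τ) *
              (-(τ * μ * (1 - s) / (σ' * s)) * sqnorm (u - α)
                + ∑ k, sqnorm (A.mulVec (restr part k (u - α)))) : ℝ) : EReal))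
      ≤ Dobj f A ℓ α - Dobj f A ℓ (α + γ • ∑ k, Δα k) := by
  classical
  have hτne : (τ:ℝ) ≠ 0 := ne_of_gt hτ
  have hσne : (σ':ℝ) ≠ 0 := ne_of_gt hσ'
  have hsne : (s:ℝ) ≠ 0 := ne_of_gt hs0
  have hγne : (γ:ℝ) ≠ 0 := ne_of_gt hγ0
  have hKne : ((K:ℝ)) ≠ 0 := Nat.cast_ne_zero.2 hK.ne'
  set w : Fin d → ℝ := f' (A.mulVec α) with hw
  set zz : Fin n → ℝ := fun i => -(dotp (col A i) w) with hzz
  have hbot : ∀ i a, ℓ i a ≠ ⊥ := fun i => (hℓproper i).1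
  -- convexity of each ℓ i
  have hcvx : ∀ i, CvxE (ℓ i) := by
    intro i a b t ht0 ht1
    have h := hℓsc i a b t ht0 ht1
    have ht1' : (0:ℝ) ≤ 1 - t := by linarith
    have hnn : (0:ℝ) ≤ μ/2*t*(1-t)*(a-b)^2 := by positivity
    calc ℓ i (t*a+(1-t)*b) = ℓ i (t*a+(1-t)*b) + (0:EReal) := (add_zero _).symm
      _ ≤ ℓ i (t*a+(1-t)*b) + ((μ/2*t*(1-t)*(a-b)^2 : ℝ) : EReal) := by
          apply add_le_add_right
          exact_mod_cast hnn
      _ ≤ _ := h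
  -- conjugate subgradient identities
  have hconj : ∀ i, ∃ G : ℝ, conj (ℓ i) (zz i) = (G : EReal) ∧
      ℓ i (u i) = ((u i * zz i - G : ℝ) : EReal) := fun i =>
    conj_subgrad (hbot i) (hℓproper i).2 (hℓlsc i) (hcvx i) (hu i)
  choose Ls hLs hLu using hconj
  -- real values of ℓ i (α i)
  have hsumne : (∑ i, ℓ i (α i)) ≠ ⊤ := by
    intro h
    rw [Dobj, h, EReal.coe_add_top] at hα
    exact absurd hα (lt_irrefl _)
  have hati : ∀ i, ℓ i (α i) ≠ ⊤ := fun i =>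
    ne_top_of_sum Finset.univ (fun j => ℓ j (α j)) (fun j _ => hbot j _) hsumne
      (Finset.mem_univ i)
  have hLaex : ∀ i, ∃ r : ℝ, ℓ i (α i) = (r : EReal) := fun i =>
    ⟨_, (EReal.coe_toReal (hati i) (hbot i _)).symm⟩
  choose La hLa using hLaex
  set Fv : ℝ := f (A.mulVec α) with hFv
  set DR : ℝ := Fv + ∑ i, La i with hDR
  have hDαr : Dobj f A ℓ α = (DR : EReal) := by
    rw [Dobj, hDR, EReal.coe_add, coe_sum]
    congr 1
    exact Finset.sum_congr rfl fun i _ => hLa i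
  -- gap value
  set gapr : ℝ := dotp w (A.mulVec α) + ∑ i, Ls i + ∑ i, La i with hgapr
  have hfconj : fconj f w = ((dotp w (A.mulVec α) - Fv : ℝ) : EReal) := by
    apply le_antisymm
    · apply iSup_le; intro v
      rw [EReal.coe_le_coe_iff]
      have h := hfconv v (A.mulVec α)
      have h2 : dotp w (v - A.mulVec α) = dotp w v - dotp w (A.mulVec α) :=
        dotp_sub_right w v (A.mulVec α)
      rw [hFv]
      linarith
    · exact le_iSup (fun v => ((dotp w v - f v : ℝ) : EReal)) (A.mulVec α)
  have hgap : gap f f' A ℓ α = (gapr : EReal) := by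
    simp only [gap, Pobj, ← hw]
    rw [hfconj, hDαr]
    have hPs : ∑ i, conj (ℓ i) (-(dotp (col A i) w)) = ((∑ i, Ls i : ℝ) : EReal) := by
      rw [coe_sum]
      exact Finset.sum_congr rfl fun i _ => hLs i
    rw [hPs, ← EReal.coe_add, ← EReal.coe_add, EReal.coe_eq_coe_iff, hgapr, hDR]
    ring
  -- Gk at 0
  have hGk0 : ∀ k, Gk f f' A ℓ part τ σ' k (A.mulVec α) α 0
      = ((Fv / K + ∑ i ∈ block part k, La i : ℝ) : EReal) := by
    intro k
    simp only [Gk]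
    have h1 : ∑ i ∈ block part k, ℓ i (α i + (0 : Fin n → ℝ) i)
        = ((∑ i ∈ block part k, La i : ℝ) : EReal) := by
      rw [coe_sum]
      refine Finset.sum_congr rfl fun i _ => ?_
      rw [Pi.zero_apply, add_zero]
      exact hLa i
    rw [h1, ← EReal.coe_add, EReal.coe_eq_coe_iff]
    rw [Matrix.mulVec_zero, dotp_zero_right, sqnorm_zero, ← hFv]
    ring
  -- Gk at the comparison point, upper bound
  set B : Fin K → ℝ := fun k => Fv / K + s * dotp w (A.mulVec (restr part k (u - α)))
      + σ' * s^2 / (2*τ) * sqnorm (A.mulVec (restr part k (u - α)))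
      + ∑ i ∈ block part k,
          (s * (u i * zz i - Ls i) + (1-s) * La i - μ/2*s*(1-s)*(u i - α i)^2) with hB
  have hGkB : ∀ k, Gk f f' A ℓ part τ σ' k (A.mulVec α) α (restr part k (s • (u - α)))
      ≤ ((B k : ℝ) : EReal) := by
    intro k
    simp only [Gk]
    have hq : f (A.mulVec α) / K + dotp (f' (A.mulVec α)) (A.mulVec (restr part k (s • (u - α))))
        + σ' / (2 * τ) * sqnorm (A.mulVec (restr part k (s • (u - α))))
        = Fv / K + s * dotp w (A.mulVec (restr part k (u - α)))
          + σ' * s^2 / (2*τ) * sqnorm (A.mulVec (restr part k (u - α))) := by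
      rw [restr_smul, Matrix.mulVec_smul, dotp_smul_right, sqnorm_smul, ← hw, ← hFv]
      ring
    rw [hq]
    have hsum : ∑ i ∈ block part k, ℓ i (α i + restr part k (s • (u - α)) i)
        ≤ ((∑ i ∈ block part k,
            (s * (u i * zz i - Ls i) + (1-s) * La i - μ/2*s*(1-s)*(u i - α i)^2) : ℝ) : EReal) := by
      rw [coe_sum]
      refine Finset.sum_le_sum fun i hi => ?_
      have hpk : part i = k := by simpa [block] using hi
      have harg : α i + restr part k (s • (u - α)) i = s * u i + (1 - s) * α i := by
        simp only [restr, hpk, if_pos, Pi.smul_apply, Pi.sub_apply, smul_eq_mul]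
        ring
      rw [harg]
      have hsc := hℓsc i (u i) (α i) s hs0.le hs1
      rw [hLu i, hLa i] at hsc
      rw [← EReal.coe_mul, ← EReal.coe_mul, ← EReal.coe_add] at hsc
      have hmv : ℓ i (s * u i + (1 - s) * α i)
          ≤ ((s * (u i * zz i - Ls i) + (1 - s) * La i : ℝ) : EReal)
            - ((μ / 2 * s * (1 - s) * (u i - α i) ^ 2 : ℝ) : EReal) := by
        rw [EReal.le_sub_iff_add_le (Or.inl (EReal.coe_ne_bot _))
          (Or.inl (EReal.coe_ne_top _))]
        exact hsc
      rw [← EReal.coe_sub] at hmv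
      exact hmv
    calc ((Fv / K + s * dotp w (A.mulVec (restr part k (u - α)))
          + σ' * s^2 / (2*τ) * sqnorm (A.mulVec (restr part k (u - α))) : ℝ) : EReal)
          + ∑ i ∈ block part k, ℓ i (α i + restr part k (s • (u - α)) i)
        ≤ ((Fv / K + s * dotp w (A.mulVec (restr part k (u - α)))
          + σ' * s^2 / (2*τ) * sqnorm (A.mulVec (restr part k (u - α))) : ℝ) : EReal)
          + ((∑ i ∈ block part k,
            (s * (u i * zz i - Ls i) + (1-s) * La i - μ/2*s*(1-s)*(u i - α i)^2) : ℝ) : EReal) :=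
          add_le_add_right hsum _
      _ = ((B k : ℝ) : EReal) := by rw [← EReal.coe_add, hB]
  -- process the approximation hypothesis
  have happK : ∀ k, ∃ gd : ℝ, Gk f f' A ℓ part τ σ' k (A.mulVec α) α (Δα k) = (gd : EReal) ∧
      gd ≤ Θ * (Fv / K + ∑ i ∈ block part k, La i) + (1-Θ) * B k := by
    intro k
    obtain ⟨hsupp, Δst, hsupps, hmin, happ⟩ := hΔα k
    have h0 : Gk f f' A ℓ part τ σ' k (A.mulVec α) α Δst
        ≤ ((Fv / K + ∑ i ∈ block part k, La i : ℝ) : EReal) :=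
      (hmin 0 (zero_supported part k)).trans_eq (hGk0 k)
    have hnbot : Gk f f' A ℓ part τ σ' k (A.mulVec α) α Δst ≠ ⊥ := by
      simp only [Gk]
      rw [Ne, EReal.add_eq_bot_iff]
      push_neg
      exact ⟨EReal.coe_ne_bot _, sum_ne_bot _ _ fun i _ => hbot i _⟩
    have hntop : Gk f f' A ℓ part τ σ' k (A.mulVec α) α Δst ≠ ⊤ :=
      ne_top_of_le_ne_top (EReal.coe_ne_top _) h0
    obtain ⟨ms, hms⟩ : ∃ ms : ℝ, Gk f f' A ℓ part τ σ' k (A.mulVec α) α Δst = (ms : EReal) :=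
      ⟨_, (EReal.coe_toReal hntop hnbot).symm⟩
    have hmsle : ms ≤ B k := by
      have h2 := (hmin _ (restr_supported part k (s • (u - α)))).trans (hGkB k)
      rw [hms] at h2
      exact_mod_cast h2
    rw [hms, hGk0 k] at happ
    rw [← EReal.coe_sub, ← EReal.coe_mul] at happ
    have hdtop : Gk f f' A ℓ part τ σ' k (A.mulVec α) α (Δα k) ≠ ⊤ := by
      intro h
      rw [h, EReal.top_sub_coe] at happ
      exact (EReal.coe_ne_top _) (top_le_iff.1 happ)
    have hdbot : Gk f f' A ℓ part τ σ' k (A.mulVec α) α (Δα k) ≠ ⊥ := by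
      simp only [Gk]
      rw [Ne, EReal.add_eq_bot_iff]
      push_neg
      exact ⟨EReal.coe_ne_bot _, sum_ne_bot _ _ fun i _ => hbot i _⟩
    obtain ⟨gdv, hgdv⟩ : ∃ gdv : ℝ,
        Gk f f' A ℓ part τ σ' k (A.mulVec α) α (Δα k) = (gdv : EReal) :=
      ⟨_, (EReal.coe_toReal hdtop hdbot).symm⟩
    refine ⟨gdv, hgdv, ?_⟩
    rw [hgdv, ← EReal.coe_sub, EReal.coe_le_coe_iff] at happ
    have h3 : (1-Θ) * ms ≤ (1-Θ) * B k :=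
      mul_le_mul_of_nonneg_left hmsle (by linarith)
    have e1 : Θ * (Fv / (K:ℝ) + ∑ i ∈ block part k, La i - ms)
        = Θ * (Fv / (K:ℝ) + ∑ i ∈ block part k, La i) - Θ * ms := by ring
    have e2 : (1-Θ) * ms = ms - Θ * ms := by ring
    have e3 : (1-Θ) * B k = B k - Θ * B k := by ring
    clear_value B Fv
    linarith [happ, h3, e1, e2, e3]
  choose gd hgd hgdle using happK
  -- real values of ℓ at the updated points
  have hLdex : ∀ i, ∃ r : ℝ, ℓ i (α i + Δα (part i) i) = (r : EReal) := by
    intro i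
    have hk := hgd (part i)
    have hmem : i ∈ block part (part i) := by simp [block]
    have hsumne' : (∑ j ∈ block part (part i), ℓ j (α j + Δα (part i) j)) ≠ ⊤ := by
      intro h
      have h2 : Gk f f' A ℓ part τ σ' (part i) (A.mulVec α) α (Δα (part i)) = ⊤ := by
        simp only [Gk]
        rw [h, EReal.coe_add_top]
      rw [hk] at h2
      exact EReal.coe_ne_top _ h2
    have h3 := ne_top_of_sum (block part (part i)) _ (fun j _ => hbot j _) hsumne' hmem
    exact ⟨_, (EReal.coe_toReal h3 (hbot i _)).symm⟩
  choose LΔ hLΔ using hLdex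
  -- real expansion of gd k
  have hgdeq : ∀ k, gd k = Fv / K + dotp w (A.mulVec (Δα k))
      + σ' / (2*τ) * sqnorm (A.mulVec (Δα k)) + ∑ i ∈ block part k, LΔ i := by
    intro k
    have hk := hgd k
    simp only [Gk] at hk
    have hsum : ∑ i ∈ block part k, ℓ i (α i + Δα k i)
        = ((∑ i ∈ block part k, LΔ i : ℝ) : EReal) := by
      rw [coe_sum]
      refine Finset.sum_congr rfl fun i hi => ?_
      have hpk : part i = k := by simpa [block] using hi
      rw [← hpk]
      exact hLΔ i
    rw [hsum, ← EReal.coe_add, EReal.coe_eq_coe_iff] at hk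
    rw [← hFv, ← hw] at hk
    linarith [hk]
  -- update bound
  set Δs : Fin n → ℝ := ∑ k, Δα k with hΔs
  have hsuppall : ∀ k, supportedOn part k (Δα k) := fun k => (hΔα k).1
  have hrestrΔ : ∀ k, restr part k Δs = Δα k := fun k => restr_eq_of_supported hsuppall k
  set Q' : ℝ := ∑ k, sqnorm (A.mulVec (Δα k)) with hQ'
  set DP : ℝ := Fv + γ * dotp w (A.mulVec Δs) + 1/(2*τ)*γ^2*(σ'/γ*Q')
      + ∑ i, (γ * LΔ i + (1-γ) * La i) with hDP
  have hDplus : Dobj f A ℓ (α + γ • Δs) ≤ (DP : EReal) := by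
    rw [Dobj]
    have hfb : f (A.mulVec (α + γ • Δs))
        ≤ Fv + γ * dotp w (A.mulVec Δs) + 1/(2*τ)*γ^2*(σ'/γ*Q') := by
      have hmv : A.mulVec (α + γ • Δs) = A.mulVec α + γ • A.mulVec Δs := by
        rw [Matrix.mulVec_add, Matrix.mulVec_smul]
      have hsm := hfsmooth (A.mulVec α + γ • A.mulVec Δs) (A.mulVec α)
      rw [add_sub_cancel_left, dotp_smul_right, sqnorm_smul, ← hFv, ← hw] at hsm
      have hsafe' := hsafe Δs
      have hQr : ∑ k, sqnorm (A.mulVec (restr part k Δs)) = Q' := by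
        rw [hQ']
        exact Finset.sum_congr rfl fun k _ => by rw [hrestrΔ k]
      rw [hQr] at hsafe'
      rw [hmv]
      refine hsm.trans ?_
      nlinarith [mul_le_mul_of_nonneg_left hsafe'
        (by positivity : (0:ℝ) ≤ 1/(2*τ)*γ^2)]
    have hlsum : ∑ i, ℓ i ((α + γ • Δs) i)
        ≤ ((∑ i, (γ * LΔ i + (1-γ) * La i) : ℝ) : EReal) := by
      rw [coe_sum]
      refine Finset.sum_le_sum fun i _ => ?_
      have hai : (α + γ • Δs) i = γ * (α i + Δα (part i) i) + (1 - γ) * α i := by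
        simp only [Pi.add_apply, Pi.smul_apply, smul_eq_mul, hΔs]
        rw [sum_apply_supported hsuppall i]
        ring
      rw [hai]
      exact cvx_real (hcvx i) hγ0.le hγ1 (hLΔ i).le (hLa i).le (hbot i)
    calc ((f (A.mulVec (α + γ • Δs)) : ℝ) : EReal) + ∑ i, ℓ i ((α + γ • Δs) i)
        ≤ ((Fv + γ * dotp w (A.mulVec Δs) + 1/(2*τ)*γ^2*(σ'/γ*Q') : ℝ) : EReal)
          + ((∑ i, (γ * LΔ i + (1-γ) * La i) : ℝ) : EReal) :=
          add_le_add (EReal.coe_le_coe_iff.2 hfb) hlsum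
      _ = (DP : EReal) := by rw [← EReal.coe_add, hDP]
  -- sum identities
  have hsum_g0 : ∑ k, (Fv / K + ∑ i ∈ block part k, La i) = DR := by
    rw [Finset.sum_add_distrib, Finset.sum_const, sum_blocks, hDR]
    simp only [Finset.card_univ, Fintype.card_fin, nsmul_eq_mul]
    field_simp
  have hsum_gd : ∑ k, gd k = Fv + dotp w (A.mulVec Δs) + σ'/(2*τ) * Q' + ∑ i, LΔ i := by
    calc ∑ k, gd k = ∑ k, (Fv / K + dotp w (A.mulVec (Δα k))
          + σ' / (2*τ) * sqnorm (A.mulVec (Δα k)) + ∑ i ∈ block part k, LΔ i) :=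
          Finset.sum_congr rfl fun k _ => hgdeq k
      _ = _ := by
          rw [Finset.sum_add_distrib, Finset.sum_add_distrib, Finset.sum_add_distrib,
            Finset.sum_const, sum_blocks, ← Finset.mul_sum, ← dotp_sum_right,
            ← mulVec_finsum, ← hΔs, ← hQ']
          simp only [Finset.card_univ, Fintype.card_fin, nsmul_eq_mul]
          field_simp
  have hN : sqnorm (u - α) = ∑ i, (u i - α i)^2 := by
    simp [sqnorm]
  have hsum_B : ∑ k, B k = Fv + s * dotp w (A.mulVec (u - α))
      + σ'*s^2/(2*τ) * (∑ k, sqnorm (A.mulVec (restr part k (u - α))))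
      + (s * (∑ i, u i * zz i) - s * (∑ i, Ls i) + (1-s) * (∑ i, La i)
        - μ/2*s*(1-s) * sqnorm (u - α)) := by
    simp only [hB]
    rw [Finset.sum_add_distrib, Finset.sum_add_distrib, Finset.sum_add_distrib,
      Finset.sum_const, sum_blocks, ← Finset.mul_sum, ← Finset.mul_sum,
      ← dotp_sum_right, ← mulVec_finsum, sum_restr]
    simp only [Finset.card_univ, Fintype.card_fin, nsmul_eq_mul]
    rw [hN]
    have hsplit : ∑ i, (s * (u i * zz i - Ls i) + (1-s) * La i
        - μ/2*s*(1-s)*(u i - α i)^2)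
        = s * (∑ i, u i * zz i) - s * (∑ i, Ls i) + (1-s) * (∑ i, La i)
          - μ/2*s*(1-s) * (∑ i, (u i - α i)^2) := by
      rw [Finset.mul_sum, Finset.mul_sum, Finset.mul_sum, Finset.mul_sum,
        ← Finset.sum_sub_distrib, ← Finset.sum_add_distrib, ← Finset.sum_sub_distrib]
      exact Finset.sum_congr rfl fun i _ => by ring
    rw [hsplit]
    field_simp
  have hIPα : dotp w (A.mulVec α) = -∑ i, α i * zz i := by
    rw [dotp_mulVec, ← Finset.sum_neg_distrib]
    refine Finset.sum_congr rfl fun i _ => ?_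
    simp only [hzz]
    ring
  have hIP1 : dotp w (A.mulVec (u - α)) = -(∑ i, u i * zz i) + ∑ i, α i * zz i := by
    rw [dotp_mulVec, ← Finset.sum_neg_distrib, ← Finset.sum_add_distrib]
    refine Finset.sum_congr rfl fun i _ => ?_
    simp only [hzz, Pi.sub_apply]
    ring
  -- the error term
  set errr : ℝ := σ' * s ^ 2 / (2 * τ) *
      (-(τ * μ * (1 - s) / (σ' * s)) * sqnorm (u - α)
        + ∑ k, sqnorm (A.mulVec (restr part k (u - α)))) with herr
  have hfinal : γ * (1 - Θ) * (s * gapr - errr) ≤ DR - DP := by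
    have h1 : ∑ k, gd k ≤ Θ * DR + (1-Θ) * ∑ k, B k := by
      calc ∑ k, gd k
          ≤ ∑ k, (Θ * (Fv / K + ∑ i ∈ block part k, La i) + (1-Θ) * B k) :=
            Finset.sum_le_sum fun k _ => hgdle k
        _ = Θ * DR + (1-Θ) * ∑ k, B k := by
            rw [Finset.sum_add_distrib, ← Finset.mul_sum, ← Finset.mul_sum, hsum_g0]
    have hsplit2 : ∑ i, (γ * LΔ i + (1-γ) * La i)
        = γ * (∑ i, LΔ i) + (1-γ) * (∑ i, La i) := by
      rw [Finset.sum_add_distrib, ← Finset.mul_sum, ← Finset.mul_sum]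
    have h2 : DR - DP = γ * (DR - ∑ k, gd k) := by
      rw [hDP, hsum_gd, hDR, hsplit2]
      field_simp
      ring
    have hdiv : σ' * s ^ 2 / (2 * τ) * (τ * μ * (1 - s) / (σ' * s)) = s*μ*(1-s)/2 := by
      field_simp
    have herr2 : errr = -(s*μ*(1-s)/2) * sqnorm (u - α)
        + σ' * s ^ 2 / (2 * τ) * (∑ k, sqnorm (A.mulVec (restr part k (u - α)))) := by
      rw [herr]
      linear_combination (-(sqnorm (u - α))) * hdiv
    have hE1 : DR - ∑ k, B k = s * gapr - errr := by
      rw [hsum_B, hgapr, hIPα, hIP1, herr2, hDR]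
      ring
    have h3 : (1-Θ) * (DR - ∑ k, B k) ≤ DR - ∑ k, gd k := by nlinarith [h1]
    calc γ * (1 - Θ) * (s * gapr - errr) = γ * ((1-Θ) * (DR - ∑ k, B k)) := by
          rw [← hE1]; ring
      _ ≤ γ * (DR - ∑ k, gd k) := mul_le_mul_of_nonneg_left h3 hγ0.le
      _ = DR - DP := h2.symm
  -- conversion to EReal
  rw [hgap, hDαr]
  rw [show ((s : ℝ) : EReal) * ((gapr : ℝ) : EReal) = ((s * gapr : ℝ) : EReal) from
    (EReal.coe_mul _ _).symm]
  rw [← EReal.coe_sub, ← EReal.coe_mul]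
  calc ((γ * (1 - Θ) * (s * gapr - errr) : ℝ) : EReal) ≤ ((DR - DP : ℝ) : EReal) :=
        EReal.coe_le_coe_iff.2 hfinal
    _ = (DR : EReal) - (DP : EReal) := EReal.coe_sub _ _
    _ ≤ (DR : EReal) - Dobj f A ℓ (α + γ • Δs) := EReal.sub_le_sub le_rfl hDplus

end ProxCoCoA
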